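/- For every H ∈ (0,1) and every t ≥ 0, one has 1 − B_H(t) ≥ (1+H)(2+4H)^{−1} · ∫_{e^{−t}}^{1} R_H(u) du, where B_H(t) = [2(1+H)(e^{Ht} + e^{−Ht}) − (e^{(1+H)t} + e^{−(1+H)t}) + (e^{t/2} − e^{−t/2})^{2H+2}]/(2+4H) and R_H(x) = 1 − 2Hx − (1−x)^{2H}(1−x²) + 2Hx^{2H+1} − x^{2+2H}. -/

import Mathlib

/-!
Differentiating the closed form of `B_H` gives `B_H'(s) = -(1+H)(2+4H)⁻¹ e^{(1+H)s} R_H(e^{-s})`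
(with `x = e^{-s}`, the term `(e^{s/2} - e^{-s/2})^{2H+1} (e^{s/2} + e^{-s/2})` is
`e^{(1+H)s} (1-x)^{2H} (1-x²)`), so `1 - B_H(t)` is `(1+H)(2+4H)⁻¹ ∫₀ᵗ e^{(1+H)s} R_H(e^{-s}) ds`.
The substitution `u = e^{-s}` turns `∫_{e^{-t}}^1 R_H` into the same integral with `e^{-s}` in place
of `e^{(1+H)s}`, and the inequality follows from `e^{-s} ≤ e^{(1+H)s}` and `R_H ≥ 0` on `[0,1]`.
The latter comes from Bernoulli's inequality `(1-x)^p ≤ 1 - px` and `x ≤ x^p`, for `p = 2H` when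
`H ≤ 1/2` and for `p = 2H - 1` when `H ≥ 1/2`.
-/

/-- The correlation function `B_H` (formula (18)) of the stationary process dual to the
integrated fractional Brownian motion of Hurst index `H`. -/
noncomputable def BH (H t : ℝ) : ℝ :=
  (2*(1+H)*(Real.exp (H*t) + Real.exp (-H*t))
    - (Real.exp ((1+H)*t) + Real.exp (-(1+H)*t))
    + (Real.exp (t/2) - Real.exp (-t/2)) ^ (2*H+2)) / (2+4*H)

/-- The function `R_H` of formula (21). -/
noncomputable def RH (H x : ℝ) : ℝ :=
  1 - 2*H*x - (1-x) ^ (2*H) * (1 - x^2) + 2*H*x ^ (2*H+1) - x ^ (2+2*H)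

open Real

theorem continuous_RH {H : ℝ} (hH : 0 ≤ H) : Continuous (RH H) := by
  have h2H : Continuous fun x : ℝ => x ^ (2*H) := continuous_rpow_const (by linarith)
  have h2H1 : Continuous fun x : ℝ => x ^ (2*H+1) := continuous_rpow_const (by linarith)
  have h22H : Continuous fun x : ℝ => x ^ (2+2*H) := continuous_rpow_const (by linarith)
  unfold RH
  fun_prop

theorem one_sub_rpow_le {x p : ℝ} (hx : x ≤ 1) (hp0 : 0 ≤ p) (hp1 : p ≤ 1) :
    (1 - x) ^ p ≤ 1 - p * x := by
  simpa [sub_eq_add_neg] using rpow_one_add_le_one_add_mul_self (s := -x) (by linarith) hp0 hp1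

theorem RH_nonneg_of_le_half {H x : ℝ} (hH0 : 0 ≤ H) (hH : H ≤ 1/2) (hx0 : 0 ≤ x) (hx1 : x ≤ 1) :
    0 ≤ RH H x := by
  have hv : (1 - x) ^ (2*H) ≤ 1 - 2*H*x := one_sub_rpow_le hx1 (by linarith) (by linarith)
  have hxu : x ≤ x ^ (2*H) := self_le_rpow_of_le_one hx0 hx1 (by linarith)
  have hu1 : x ^ (2*H) ≤ 1 := rpow_le_one hx0 hx1 (by linarith)
  have h2H1 : x ^ (2*H+1) = x ^ (2*H) * x := rpow_add_one' hx0 (by linarith)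
  have h22H : x ^ (2+2*H) = x ^ (2*H) * x ^ 2 := by
    rw [← rpow_two, ← rpow_add' hx0 (by linarith)]; ring_nf
  have hRH : RH H x = (1 - x^2) * (1 - 2*H*x - (1 - x) ^ (2*H))
      + x * (x - 2*H*x^2 + x ^ (2*H) * (2*H - x)) := by
    rw [RH, h2H1, h22H]
    ring
  have hx2 : 0 ≤ 1 - x^2 := by nlinarith
  have hbracket : 0 ≤ x - 2*H*x^2 + x ^ (2*H) * (2*H - x) := by
    rcases le_total x (2*H) with hx | hx
    · nlinarith [mul_le_mul_of_nonneg_right hxu (sub_nonneg.2 hx)]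
    · nlinarith [mul_le_mul_of_nonpos_right hu1 (sub_nonpos.2 hx), mul_nonneg hH0 hx2]
  rw [hRH]
  have := sub_nonneg.2 hv
  positivity

theorem RH_nonneg_of_half_le {H x : ℝ} (hH : 1/2 ≤ H) (hH1 : H ≤ 1) (hx0 : 0 ≤ x) (hx1 : x ≤ 1) :
    0 ≤ RH H x := by
  have hv : (1 - x) ^ (2*H-1) ≤ 1 - (2*H-1)*x := one_sub_rpow_le hx1 (by linarith) (by linarith)
  have hxw : x ≤ x ^ (2*H-1) := self_le_rpow_of_le_one hx0 hx1 (by linarith)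
  have h2H : (1 - x) ^ (2*H) = (1 - x) ^ (2*H-1) * (1 - x) := by
    rw [← rpow_add_one' (by linarith) (by linarith), sub_add_cancel]
  have h2H1 : x ^ (2*H+1) = x ^ (2*H-1) * x ^ 2 := by
    rw [← rpow_two, ← rpow_add' hx0 (by linarith)]; ring_nf
  have h22H : x ^ (2+2*H) = x ^ (2*H-1) * x ^ 3 := by
    rw [← rpow_natCast, ← rpow_add' hx0 (by push_cast; linarith)]; ring_nf
  have hRH : RH H x = (1 - x) * (1 - x^2) * (1 - (2*H-1)*x - (1 - x) ^ (2*H-1))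
      + x^2 * ((2 - 2*H) * (1 - x^2) + (x ^ (2*H-1) - x) * (2*H - x)) := by
    rw [RH, h2H, h2H1, h22H]
    ring
  have hx2 : 0 ≤ 1 - x^2 := by nlinarith
  rw [hRH]
  have := sub_nonneg.2 hv
  have := sub_nonneg.2 hxw
  have : 0 ≤ 2*H - x := by linarith
  have : 0 ≤ 1 - x := by linarith
  have : 0 ≤ 2 - 2*H := by linarith
  positivity

theorem RH_nonneg {H x : ℝ} (hH0 : 0 ≤ H) (hH1 : H ≤ 1) (hx0 : 0 ≤ x) (hx1 : x ≤ 1) :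
    0 ≤ RH H x := by
  rcases le_total H (1/2) with hH | hH
  · exact RH_nonneg_of_le_half hH0 hH hx0 hx1
  · exact RH_nonneg_of_half_le hH hH1 hx0 hx1

theorem exp_mul_RH_exp_neg {H s : ℝ} (hH : 0 ≤ H) (hs : 0 ≤ s) :
    exp ((1+H)*s) * RH H (exp (-s))
      = exp ((1+H)*s) - exp (-(1+H)*s) - 2*H*(exp (H*s) - exp (-H*s))
        - (exp (s/2) - exp (-s/2)) ^ (2*H+1) * (exp (s/2) + exp (-s/2)) := by
  have hx1 : 0 ≤ 1 - exp (-s) := by simp [exp_le_one_iff, hs]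
  have hsub : exp (s/2) - exp (-s/2) = exp (s/2) * (1 - exp (-s)) := by
    rw [mul_sub, ← exp_add]; ring_nf
  have hadd : exp (s/2) + exp (-s/2) = exp (s/2) * (1 + exp (-s)) := by
    rw [mul_add, ← exp_add]; ring_nf
  have hpow : (exp (s/2) - exp (-s/2)) ^ (2*H+1) * (exp (s/2) + exp (-s/2))
      = exp ((1+H)*s) * (1 - exp (-s)) ^ (2*H) * (1 - exp (-s) ^ 2) := by
    rw [hsub, hadd, mul_rpow (exp_pos _).le hx1, rpow_add_one' hx1 (by linarith), ← exp_mul]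
    have : exp (s/2*(2*H+1)) * exp (s/2) = exp ((1+H)*s) := by rw [← exp_add]; ring_nf
    linear_combination (1 - exp (-s)) ^ (2*H) * (1 - exp (-s) ^ 2) * this
  have h1 : exp ((1+H)*s) * exp (-s) = exp (H*s) := by rw [← exp_add]; ring_nf
  have h2 : exp ((1+H)*s) * exp (-s) ^ (2*H+1) = exp (-H*s) := by
    rw [← exp_mul, ← exp_add]; ring_nf
  have h3 : exp ((1+H)*s) * exp (-s) ^ (2+2*H) = exp (-(1+H)*s) := by
    rw [← exp_mul, ← exp_add]; ring_nf
  rw [hpow, RH]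
  linear_combination 2*H*h2 - h3 - 2*H*h1

theorem hasDerivAt_BH {H s : ℝ} (hH : 0 ≤ H) (hs : 0 ≤ s) :
    HasDerivAt (BH H) (-(1+H) / (2+4*H) * (exp ((1+H)*s) * RH H (exp (-s)))) s := by
  have hexp (c : ℝ) : HasDerivAt (fun u => exp (c*u)) (c * exp (c*s)) s := by
    simpa [mul_comm] using ((hasDerivAt_id s).const_mul c).exp
  have hsinh : HasDerivAt (fun u => exp (u/2) - exp (-u/2)) _ s :=
    ((hasDerivAt_id' s).div_const 2).exp.sub ((hasDerivAt_neg s).div_const 2).exp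
  have hpow := (hasDerivAt_rpow_const (p := 2*H+2) (Or.inr (by linarith))).comp s hsinh
  have hBH : HasDerivAt (BH H) _ s := ((((hexp H).add (hexp (-H))).const_mul (2*(1+H))).sub
    ((hexp (1+H)).add (hexp (-(1+H))))).add hpow |>.div_const (2+4*H)
  refine hBH.congr_deriv ?_
  rw [exp_mul_RH_exp_neg hH hs, show 2*H+2-1 = 2*H+1 by ring]
  ring

theorem BH_zero {H : ℝ} (hH : 0 ≤ H) : BH H 0 = 1 := by
  simp only [BH, mul_zero, neg_zero, zero_div, exp_zero, sub_self]
  rw [zero_rpow (by linarith)]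
  field_simp
  ring

theorem one_sub_BH_eq_integral {H t : ℝ} (hH : 0 ≤ H) (ht : 0 ≤ t) :
    1 - BH H t = (1+H) / (2+4*H) * ∫ s in (0:ℝ)..t, exp ((1+H)*s) * RH H (exp (-s)) := by
  have hR := continuous_RH hH
  have hFTC := intervalIntegral.integral_eq_sub_of_hasDerivAt
    (fun s hs => hasDerivAt_BH hH (Set.uIcc_of_le ht ▸ hs).1)
    (Continuous.intervalIntegrable (by fun_prop) 0 t)
  rw [intervalIntegral.integral_const_mul, BH_zero hH] at hFTC
  linear_combination hFTC

theorem integral_comp_exp_neg {f : ℝ → ℝ} (hf : Continuous f) (a b : ℝ) :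
    ∫ u in exp (-b)..exp (-a), f u = ∫ s in a..b, exp (-s) * f (exp (-s)) := by
  have h := intervalIntegral.integral_comp_mul_deriv (a := a) (b := b) (f := fun s => exp (-s))
    (fun s _ => by simpa using (hasDerivAt_neg s).exp) (by fun_prop) hf
  simp only [Function.comp_apply, mul_neg, intervalIntegral.integral_neg] at h
  rw [intervalIntegral.integral_symm, ← h]
  simp only [mul_comm, neg_neg]

/-- inequality (25): for `H ∈ (0,1)` and `t ≥ 0`,
`1 − B_H(t) ≥ (1+H)(2+4H)⁻¹ ∫_{e^{−t}}^1 R_H(u) du`. -/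
theorem statement9 (H t : ℝ) (hH : H ∈ Set.Ioo (0:ℝ) 1) (ht : 0 ≤ t) :
    (1+H) * (2+4*H)⁻¹ * (∫ u in (Real.exp (-t))..1, RH H u) ≤ 1 - BH H t := by
  obtain ⟨hH0, hH1⟩ := hH
  have hR := continuous_RH hH0.le
  have hsubst : ∫ u in exp (-t)..1, RH H u = ∫ s in (0:ℝ)..t, exp (-s) * RH H (exp (-s)) := by
    simpa using integral_comp_exp_neg hR 0 t
  rw [one_sub_BH_eq_integral hH0.le ht, ← div_eq_mul_inv, hsubst]
  refine mul_le_mul_of_nonneg_left (intervalIntegral.integral_mono_on ht ?_ ?_ fun s hs => ?_)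
    (by positivity)
  · apply Continuous.intervalIntegrable; fun_prop
  · apply Continuous.intervalIntegrable; fun_prop
  have hRs : 0 ≤ RH H (exp (-s)) :=
    RH_nonneg hH0.le hH1.le (exp_pos _).le (exp_le_one_iff.2 (by linarith [hs.1]))
  exact mul_le_mul_of_nonneg_right (exp_le_exp.2 (by nlinarith [hs.1])) hRs
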